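/- (Redundant Set Characterization) In the counter BPA system Δ₀, for any process α with Var(α) ⊆ B: α is a valid encoding of the n-bit binary number b_n b_{n-1} … b_1 if and only if Rd(α) = { Z_1^{b_1}, Z_2^{b_2}, …, Z_n^{b_n} }. -/

import Mathlib

/-- Silent-step closure (⇒): reflexive transitive closure of τ-transitions. -/
def SilentStar {S A : Type*} (trans : S → A → S → Prop) (tau : A) : S → S → Prop :=
  Relation.ReflTransGen (fun p q => trans p tau q)

/-- A symmetric relation is a branching bisimulation. -/
def IsBranchingBisim {S A : Type*} (trans : S → A → S → Prop) (tau : A)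
    (R : S → S → Prop) : Prop :=
  Symmetric R ∧
  ∀ a b a' (l : A), R a b → trans a l a' →
    (l = tau ∧ R a' b) ∨
    ∃ b'' b', SilentStar trans tau b b'' ∧ trans b'' l b' ∧ R a b'' ∧ R a' b'

/-- A symmetric relation is a weak bisimulation. -/
def IsWeakBisim {S A : Type*} (trans : S → A → S → Prop) (tau : A)
    (R : S → S → Prop) : Prop :=
  Symmetric R ∧
  ∀ a b a' (l : A), R a b → trans a l a' →
    (l = tau ∧ R a' b) ∨
    ∃ g1 g2 b', SilentStar trans tau b g1 ∧ trans g1 l g2 ∧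
      SilentStar trans tau g2 b' ∧ R a' b'

/-- Branching bisimilarity: the union of all branching bisimulations. -/
def BrBisim {S A : Type*} (trans : S → A → S → Prop) (tau : A) (a b : S) : Prop :=
  ∃ R, IsBranchingBisim trans tau R ∧ R a b

/-- Weak bisimilarity: the union of all weak bisimulations. -/
def WkBisim {S A : Type*} (trans : S → A → S → Prop) (tau : A) (a b : S) : Prop :=
  ∃ R, IsWeakBisim trans tau R ∧ R a b

/-- One-step transition of a BPA system: X β →λ α β whenever X →λ α is a rule. -/
def BPA.Trans {V A : Type*} (rules : V → A → List V → Prop)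
    (p : List V) (l : A) (q : List V) : Prop :=
  ∃ X α β, p = X :: β ∧ rules X l α ∧ q = α ++ β

/-- A step by some action. -/
def BPA.Step {V A : Type*} (rules : V → A → List V → Prop) (p q : List V) : Prop :=
  ∃ l, BPA.Trans rules p l q

/-- Reachability in a BPA system. -/
def BPA.Reach {V A : Type*} (rules : V → A → List V → Prop) : List V → List V → Prop :=
  Relation.ReflTransGen (BPA.Step rules)

/-- A BPA system is normed if every variable can reach the empty process ε. -/
def BPA.Normed {V A : Type*} (rules : V → A → List V → Prop) : Prop :=
  ∀ X : V, BPA.Reach rules [X] []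

/-- The redundant set Rd(α) = { X | Xα ≃ α }. -/
def BPA.Rd {V A : Type*} (rules : V → A → List V → Prop) (tau : A) (α : List V) : Set V :=
  {X | BrBisim (BPA.Trans rules) tau (X :: α) α}

/-- Variables of the counter system Δ₀. -/
inductive CVar (n : ℕ) : Type
  | B (i : Fin n) (b : Bool)
  | Z (i : Fin n) (b : Bool)
  | BP (i : Fin n) (b : Bool) (j : Fin n) (b' : Bool)
  deriving DecidableEq

/-- Actions of the counter system Δ₀. -/
inductive CAct (n : ℕ) : Type
  | tau
  | d
  | a (i : Fin n) (b : Bool)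
  deriving DecidableEq

/-- The rules of the counter system Δ₀. -/
inductive CRule {n : ℕ} : CVar n → CAct n → List (CVar n) → Prop
  | z_a (i : Fin n) (b : Bool) : CRule (.Z i b) (.a i b) []
  | z_tau (i : Fin n) (b : Bool) : CRule (.Z i b) .tau []
  | b_self (i : Fin n) (b : Bool) : CRule (.B i b) (.a i b) [.B i b]
  | b_d (i : Fin n) (b : Bool) : CRule (.B i b) .d []
  | b_obs (i : Fin n) (b : Bool) (j : Fin n) (b' : Bool) :
      j ≠ i → CRule (.B i b) (.a j b') [.BP i b j b']
  | bp_self (i : Fin n) (b : Bool) (j : Fin n) (b' : Bool) :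
      j ≠ i → CRule (.BP i b j b') (.a i b) [.BP i b j b']
  | bp_d (i : Fin n) (b : Bool) (j : Fin n) (b' : Bool) :
      j ≠ i → CRule (.BP i b j b') .d [.Z j b']
  | bp_obs (i : Fin n) (b : Bool) (j : Fin n) (b' : Bool) (j' : Fin n) (b'' : Bool) :
      j ≠ i → j' ≠ i → CRule (.BP i b j b') (.a j' b'') [.BP i b j' b'']

/-- Branching bisimilarity on processes of Δ₀. -/
def CBisim {n : ℕ} (p q : List (CVar n)) : Prop :=
  BrBisim (BPA.Trans (@CRule n)) CAct.tau p q

/-- Weak bisimilarity on processes of Δ₀. -/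
def CWeak {n : ℕ} (p q : List (CVar n)) : Prop :=
  WkBisim (BPA.Trans (@CRule n)) CAct.tau p q

/-- α is a valid encoding of the n-bit binary number with i-th bit `bits i`. -/
def ValidEnc {n : ℕ} (α : List (CVar n)) (bits : Fin n → Bool) : Prop :=
  (∀ X ∈ α, ∃ i b, X = CVar.B i b) ∧
  ∀ i : Fin n, ∃ α₁ α₂ : List (CVar n),
    α = α₁ ++ CVar.B i (bits i) :: α₂ ∧ CVar.B i (!(bits i)) ∉ α₁

/-!
A word `α` of `B`-variables encodes at position `k` the bit of its leftmost `B_k^c`.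

No `B_i^c` or `B_i^c(j,c')` is redundant: a `d`-step removes exactly one non-`Z` variable, so `X α`
has a weak trace with one `d` more than `α` can perform, and branching bisimilarity preserves weak
traces. (A dead `B_i^c(i,c')` has no moves at all, while `α` can do `d`.)

For `Z_k^b`, the step `Z_k^b α --a_k^b--> α` must be answered by `α` itself. If the leftmost `B_k`
of `α` is `B_k^b`, each `B_j^c` in front of it answers by moving to `B_j^c(k,b)`, which behaves
like `B_j^c` except that its `d`-step exposes `Z_k^b`; this yields an explicit branching
bisimulation. Otherwise the answer comes from the head `B_j^c` with `j ≠ k` moving to `B_j^c(k,b)`,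
and matching the `d`-step of `B_j^c γ` reduces the question to `Z_k^b γ ≃ γ` for the shorter `γ`.
-/

section BranchingBisim

variable {S A : Type*} {trans : S → A → S → Prop} {tau : A}

theorem SilentStar.eq_of_forall_not_trans {p q : S} (hp : ∀ p', ¬ trans p tau p')
    (h : SilentStar trans tau p q) : q = p := by
  rcases Relation.ReflTransGen.cases_head h with rfl | ⟨p', hp', -⟩
  · rfl
  · exact absurd hp' (hp p')

theorem BrBisim.symm {p q : S} (h : BrBisim trans tau p q) : BrBisim trans tau q p :=
  let ⟨R, hR, hpq⟩ := h
  ⟨R, hR, hR.1 hpq⟩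

theorem BrBisim.exists_match {p q p' : S} {l : A} (h : BrBisim trans tau p q)
    (hp : trans p l p') :
    (l = tau ∧ BrBisim trans tau p' q) ∨
      ∃ q'' q', SilentStar trans tau q q'' ∧ trans q'' l q' ∧ BrBisim trans tau p' q' := by
  obtain ⟨R, hR, hpq⟩ := h
  rcases hR.2 p q p' l hpq hp with ⟨hl, h'⟩ | ⟨q'', q', hs, ht, -, h'⟩
  · exact Or.inl ⟨hl, R, hR, h'⟩
  · exact Or.inr ⟨q'', q', hs, ht, R, hR, h'⟩

inductive WeakTrace (trans : S → A → S → Prop) (tau : A) : List A → S → Prop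
  | nil (p : S) : WeakTrace trans tau [] p
  | tau {p p' : S} {w : List A} :
      trans p tau p' → WeakTrace trans tau w p' → WeakTrace trans tau w p
  | visible {p p' : S} {l : A} {w : List A} :
      l ≠ tau → trans p l p' → WeakTrace trans tau w p' → WeakTrace trans tau (l :: w) p

theorem WeakTrace.of_silentStar {p q : S} {w : List A} (hs : SilentStar trans tau p q)
    (hw : WeakTrace trans tau w q) : WeakTrace trans tau w p := by
  induction hs using Relation.ReflTransGen.head_induction_on with
  | refl => exact hw
  | head hstep _ ih => exact .tau hstep ih

theorem BrBisim.weakTrace {p q : S} {w : List A} (h : BrBisim trans tau p q)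
    (hw : WeakTrace trans tau w p) : WeakTrace trans tau w q := by
  induction hw generalizing q with
  | nil => exact .nil q
  | tau hstep _ ih =>
    rcases h.exists_match hstep with ⟨-, h'⟩ | ⟨q'', q', hs, ht, h'⟩
    · exact ih h'
    · exact .of_silentStar hs (.tau ht (ih h'))
  | visible hl hstep _ ih =>
    rcases h.exists_match hstep with ⟨hl', -⟩ | ⟨q'', q', hs, ht, h'⟩
    · exact absurd hl' hl
    · exact .of_silentStar hs (.visible hl ht (ih h'))

end BranchingBisim

namespace BPA

variable {V A : Type*} {rules : V → A → List V → Prop}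

theorem trans_cons_iff {X : V} {β q : List V} {l : A} :
    Trans rules (X :: β) l q ↔ ∃ γ, rules X l γ ∧ q = γ ++ β := by
  constructor
  · rintro ⟨Y, γ, β', heq, hr, rfl⟩
    obtain ⟨rfl, rfl⟩ := List.cons.inj heq
    exact ⟨γ, hr, rfl⟩
  · rintro ⟨γ, hr, rfl⟩
    exact ⟨X, γ, β, rfl, hr, rfl⟩

theorem trans_cons {X : V} {l : A} {γ : List V} (hr : rules X l γ) (β : List V) :
    Trans rules (X :: β) l (γ ++ β) :=
  trans_cons_iff.2 ⟨γ, hr, rfl⟩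

theorem not_trans_nil {l : A} {q : List V} : ¬ Trans rules [] l q := by
  rintro ⟨_, _, _, heq, -, -⟩
  exact List.cons_ne_nil _ _ heq.symm

end BPA

namespace Counter

open BPA

variable {n : ℕ}

abbrev CTrans : List (CVar n) → CAct n → List (CVar n) → Prop := BPA.Trans CRule

def AllB (α : List (CVar n)) : Prop := ∀ X ∈ α, ∃ i b, X = CVar.B i b

theorem AllB.tail {X : CVar n} {α : List (CVar n)} (h : AllB (X :: α)) : AllB α :=
  fun Y hY => h Y (List.mem_cons_of_mem X hY)

theorem AllB.exists_head {X : CVar n} {α : List (CVar n)} (h : AllB (X :: α)) :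
    ∃ i b, X = CVar.B i b :=
  h X List.mem_cons_self

def firstBit (k : Fin n) : List (CVar n) → Option Bool
  | [] => none
  | .B j c :: α => if j = k then some c else firstBit k α
  | _ :: α => firstBit k α

theorem firstBit_eq_of_split {k : Fin n} {b : Bool} {α₁ α₂ : List (CVar n)}
    (hnot : CVar.B k (!b) ∉ α₁) : firstBit k (α₁ ++ CVar.B k b :: α₂) = some b := by
  induction α₁ with
  | nil => simp [firstBit]
  | cons X α₁ ih =>
    have hrest := ih (fun h => hnot (List.mem_cons_of_mem X h))
    cases X with
    | B j c =>
      by_cases hjk : j = k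
      · subst hjk
        obtain rfl : c = b := by simpa using fun hc : c = !b => hnot (by simp [hc])
        simp [firstBit]
      · simp [firstBit, hjk, hrest]
    | Z j c => exact hrest
    | BP i c j c' => exact hrest

theorem exists_split_of_firstBit {k : Fin n} {b : Bool} {α : List (CVar n)}
    (h : firstBit k α = some b) :
    ∃ α₁ α₂, α = α₁ ++ CVar.B k b :: α₂ ∧ CVar.B k (!b) ∉ α₁ := by
  induction α with
  | nil => cases h
  | cons X α ih =>
    have prepend : firstBit k α = some b → (∀ c, X ≠ CVar.B k c) →
        ∃ α₁ α₂, X :: α = α₁ ++ CVar.B k b :: α₂ ∧ CVar.B k (!b) ∉ α₁ := by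
      intro hrest hX
      obtain ⟨α₁, α₂, rfl, hnot⟩ := ih hrest
      exact ⟨X :: α₁, α₂, rfl, by simp [hnot, (hX _).symm]⟩
    cases X with
    | B j c =>
      by_cases hjk : j = k
      · subst hjk
        obtain rfl : c = b := by simpa [firstBit] using h
        exact ⟨[], α, rfl, by simp⟩
      · exact prepend (by simpa [firstBit, hjk] using h) (by simp [hjk])
    | Z j c => exact prepend h (by simp)
    | BP i c j c' => exact prepend h (by simp)

theorem validEnc_iff_firstBit {α : List (CVar n)} (hα : AllB α) (bits : Fin n → Bool) :
    ValidEnc α bits ↔ ∀ i, firstBit i α = some (bits i) := by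
  refine (and_iff_right hα).trans (forall_congr' fun i => ⟨?_, exists_split_of_firstBit⟩)
  rintro ⟨α₁, α₂, rfl, hnot⟩
  exact firstBit_eq_of_split hnot

theorem not_trans_tau_cons {X : CVar n} (hX : ∀ i b, X ≠ CVar.Z i b) {β q : List (CVar n)} :
    ¬ CTrans (X :: β) .tau q := by
  rintro ⟨_, _, _, heq, hr, -⟩
  obtain ⟨rfl, -⟩ := List.cons.inj heq
  cases hr
  exact hX _ _ rfl

theorem silentStar_cons_eq {X : CVar n} (hX : ∀ i b, X ≠ CVar.Z i b) {β q : List (CVar n)}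
    (h : SilentStar CTrans .tau (X :: β) q) : q = X :: β :=
  SilentStar.eq_of_forall_not_trans (fun _ => not_trans_tau_cons hX) h

theorem not_trans_BP_self {i : Fin n} {c c' : Bool} {β q : List (CVar n)} {l : CAct n} :
    ¬ CTrans (CVar.BP i c i c' :: β) l q := by
  rintro ⟨_, _, _, heq, hr, -⟩
  obtain ⟨rfl, -⟩ := List.cons.inj heq
  cases hr <;> contradiction

def dCount (α : List (CVar n)) : ℕ :=
  α.countP fun X => match X with
    | .Z _ _ => false
    | _ => true

theorem dCount_eq_of_trans {p q : List (CVar n)} {l : CAct n} (h : CTrans p l q) :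
    dCount p = dCount q + if l = .d then 1 else 0 := by
  obtain ⟨X, γ, β, rfl, hr, rfl⟩ := h
  cases hr <;> simp [dCount]

theorem count_d_le_dCount {w : List (CAct n)} {p : List (CVar n)}
    (h : WeakTrace CTrans .tau w p) : w.count .d ≤ dCount p := by
  induction h with
  | nil => simp
  | tau hstep _ ih =>
    have := dCount_eq_of_trans hstep
    simp only [reduceCtorEq, if_false] at this
    omega
  | visible _ hstep _ ih =>
    have := dCount_eq_of_trans hstep
    split_ifs at this with hl <;> simp [hl] <;> omega

theorem weakTrace_replicate_d {α : List (CVar n)} (hα : AllB α) :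
    WeakTrace CTrans .tau (List.replicate α.length .d) α := by
  induction α with
  | nil => exact .nil _
  | cons X α ih =>
    obtain ⟨i, c, rfl⟩ := hα.exists_head
    exact .visible (by simp) (trans_cons (CRule.b_d i c) α) (ih hα.tail)

theorem not_bisim_of_weakTrace {X : CVar n} {α : List (CVar n)}
    (hX : WeakTrace CTrans .tau (.d :: List.replicate α.length .d) (X :: α)) :
    ¬ CBisim (X :: α) α := by
  intro h
  have hle := count_d_le_dCount (h.weakTrace hX)
  simp only [List.count_cons_self, List.count_replicate_self] at hle
  have : dCount α ≤ α.length := List.countP_le_length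
  omega

theorem eq_Z_of_mem_Rd {X : CVar n} {α : List (CVar n)} (hα : AllB α)
    (hne : ∀ i, firstBit i α ≠ none) (hX : X ∈ BPA.Rd CRule .tau α) :
    ∃ i c, X = CVar.Z i c := by
  have hd := weakTrace_replicate_d hα
  cases X with
  | Z i c => exact ⟨i, c, rfl⟩
  | B i c =>
    exact absurd hX (not_bisim_of_weakTrace (.visible (by simp) (trans_cons (CRule.b_d i c) α) hd))
  | BP i c j c' =>
    by_cases hji : j = i
    · subst hji
      obtain _ | ⟨Y, β⟩ := α
      · exact absurd rfl (hne j)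
      obtain ⟨p, q, rfl⟩ := hα.exists_head
      have htrace := BrBisim.symm hX |>.weakTrace <|
        .visible (by simp) (trans_cons (CRule.b_d p q) β) (.nil β)
      rcases htrace with _ | ⟨ht, -⟩ | ⟨-, ht, -⟩ <;> exact (not_trans_BP_self ht).elim
    · have hτ : CTrans (CVar.Z j c' :: α) .tau α := trans_cons (CRule.z_tau j c') α
      exact absurd hX (not_bisim_of_weakTrace
        (.visible (by simp) (trans_cons (CRule.bp_d i c j c' hji) α) (.tau hτ hd)))

theorem firstBit_eq_of_bisim {k : Fin n} {b : Bool} {α : List (CVar n)} (hα : AllB α)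
    (h : CBisim (CVar.Z k b :: α) α) : firstBit k α = some b := by
  induction α with
  | nil =>
    rcases h.exists_match (trans_cons (CRule.z_a k b) []) with
      ⟨hl, -⟩ | ⟨q'', q', hs, ht, -⟩
    · cases hl
    · rw [SilentStar.eq_of_forall_not_trans (fun _ => not_trans_nil) hs] at ht
      exact (not_trans_nil ht).elim
  | cons X γ ih =>
    obtain ⟨j, c, rfl⟩ := hα.exists_head
    rcases h.exists_match (trans_cons (CRule.z_a k b) _) with
      ⟨hl, -⟩ | ⟨q'', q', hs, ht, h'⟩
    · cases hl
    rw [silentStar_cons_eq (by simp) hs] at ht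
    obtain ⟨_, hr, rfl⟩ := trans_cons_iff.1 ht
    cases hr with
    | b_self => simp [firstBit]
    | b_obs _ _ _ _ hkj =>
      rcases h'.exists_match (trans_cons (CRule.b_d j c) γ) with
        ⟨hl, -⟩ | ⟨q'', q', hs, ht, h''⟩
      · cases hl
      rw [silentStar_cons_eq (by simp) hs] at ht
      obtain ⟨_, hr, rfl⟩ := trans_cons_iff.1 ht
      cases hr
      simpa [firstBit, Ne.symm hkj] using ih hα.tail h''.symm

inductive ZRedundantRel : List (CVar n) → List (CVar n) → Prop
  | refl (γ : List (CVar n)) : ZRedundantRel γ γ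
  | z_left (k : Fin n) (b : Bool) (β : List (CVar n)) :
      AllB β → firstBit k β = some b → ZRedundantRel (CVar.Z k b :: β) β
  | z_right (k : Fin n) (b : Bool) (β : List (CVar n)) :
      AllB β → firstBit k β = some b → ZRedundantRel β (CVar.Z k b :: β)
  | obs_left (j : Fin n) (c : Bool) (k : Fin n) (b : Bool) (γ : List (CVar n)) :
      AllB γ → firstBit k γ = some b → k ≠ j →
        ZRedundantRel (CVar.B j c :: γ) (CVar.BP j c k b :: γ)
  | obs_right (j : Fin n) (c : Bool) (k : Fin n) (b : Bool) (γ : List (CVar n)) :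
      AllB γ → firstBit k γ = some b → k ≠ j →
        ZRedundantRel (CVar.BP j c k b :: γ) (CVar.B j c :: γ)

theorem ZRedundantRel.symm {p q : List (CVar n)} (h : ZRedundantRel p q) : ZRedundantRel q p := by
  cases h with
  | refl => exact .refl _
  | z_left _ _ _ hβ hk => exact .z_right _ _ _ hβ hk
  | z_right _ _ _ hβ hk => exact .z_left _ _ _ hβ hk
  | obs_left _ _ _ _ _ hγ hk hkj => exact .obs_right _ _ _ _ _ hγ hk hkj
  | obs_right _ _ _ _ _ hγ hk hkj => exact .obs_left _ _ _ _ _ hγ hk hkj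

theorem ZRedundantRel.isBranchingBisim : IsBranchingBisim CTrans .tau (@ZRedundantRel n) := by
  refine ⟨fun _ _ => ZRedundantRel.symm, ?_⟩
  intro p q p' l hpq hp
  have answer : ∀ {q'}, CTrans q l q' → ZRedundantRel p' q' →
      (l = .tau ∧ ZRedundantRel p' q) ∨ ∃ q'' q', SilentStar CTrans .tau q q'' ∧
        CTrans q'' l q' ∧ ZRedundantRel p q'' ∧ ZRedundantRel p' q' :=
    fun ht h' => .inr ⟨q, _, .refl, ht, hpq, h'⟩
  cases hpq with
  | refl => exact answer hp (.refl p')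
  | z_left k b _ hβ hk =>
    obtain ⟨_, hr, rfl⟩ := trans_cons_iff.1 hp
    cases hr with
    | z_tau => exact .inl ⟨rfl, .refl _⟩
    | z_a =>
      obtain _ | ⟨X, γ⟩ := q
      · cases hk
      obtain ⟨j, c, rfl⟩ := hβ.exists_head
      by_cases hjk : j = k
      · subst hjk
        obtain rfl : c = b := by simpa [firstBit] using hk
        exact answer (trans_cons (CRule.b_self j c) γ) (.refl _)
      · have hkγ : firstBit k γ = some b := by simpa [firstBit, hjk] using hk
        exact answer (trans_cons (CRule.b_obs j c k b (Ne.symm hjk)) γ)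
          (.obs_left j c k b γ hβ.tail hkγ (Ne.symm hjk))
  | z_right k b _ hβ hk =>
    exact .inr ⟨p, p', .single (trans_cons (CRule.z_tau k b) p), hp, .refl p, .refl p'⟩
  | obs_left j c k b γ hγ hk hkj =>
    obtain ⟨_, hr, rfl⟩ := trans_cons_iff.1 hp
    cases hr with
    | b_self =>
      exact answer (trans_cons (CRule.bp_self j c k b hkj) γ) (.obs_left j c k b γ hγ hk hkj)
    | b_d => exact answer (trans_cons (CRule.bp_d j c k b hkj) γ) (.z_right k b γ hγ hk)
    | b_obs _ _ j' b' hj' =>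
      exact answer (trans_cons (CRule.bp_obs j c k b j' b' hkj hj') γ) (.refl _)
  | obs_right j c k b γ hγ hk hkj =>
    obtain ⟨_, hr, rfl⟩ := trans_cons_iff.1 hp
    cases hr with
    | bp_self => exact answer (trans_cons (CRule.b_self j c) γ) (.obs_right j c k b γ hγ hk hkj)
    | bp_d => exact answer (trans_cons (CRule.b_d j c) γ) (.z_left k b γ hγ hk)
    | bp_obs _ _ _ _ j' b' _ hj' =>
      exact answer (trans_cons (CRule.b_obs j c j' b' hj') γ) (.refl _)

theorem Z_mem_Rd_iff {k : Fin n} {b : Bool} {α : List (CVar n)} (hα : AllB α) :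
    CVar.Z k b ∈ BPA.Rd CRule .tau α ↔ firstBit k α = some b :=
  ⟨firstBit_eq_of_bisim hα,
    fun hk => ⟨ZRedundantRel, ZRedundantRel.isBranchingBisim, .z_left k b α hα hk⟩⟩

end Counter

/-- Redundant Set Characterization: α validly encodes b_n…b_1 iff
Rd(α) = { Z_1^{b_1}, …, Z_n^{b_n} }. -/
theorem counter_rd_characterization {n : ℕ} (α : List (CVar n))
    (hα : ∀ X ∈ α, ∃ i b, X = CVar.B i b) (bits : Fin n → Bool) :
    ValidEnc α bits ↔
      BPA.Rd (@CRule n) CAct.tau α = {X | ∃ i : Fin n, X = CVar.Z i (bits i)} := by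
  rw [Counter.validEnc_iff_firstBit hα]
  constructor
  · intro hbits
    ext X
    constructor
    · intro hX
      obtain ⟨i, c, rfl⟩ := Counter.eq_Z_of_mem_Rd hα (fun i => by simp [hbits i]) hX
      have hc : some c = some (bits i) := ((Counter.Z_mem_Rd_iff hα).1 hX).symm.trans (hbits i)
      exact ⟨i, by rw [Option.some_inj.1 hc]⟩
    · rintro ⟨i, rfl⟩
      exact (Counter.Z_mem_Rd_iff hα).2 (hbits i)
  · intro hRd i
    exact (Counter.Z_mem_Rd_iff hα).1 (hRd ▸ ⟨i, rfl⟩)
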